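/- Let N ∈ ℕ, N ≥ 1, θ ∈ ℝ with cos θ ≠ 0, and α : ℤ → ℝ with α_{x+1} − α_x ≡ 2π/N (mod 2π). With D_x = [[e^{iπ/N}cos θ, e^{iα_x}sin θ],[e^{−iα_x}sin θ, −e^{−iπ/N}cos θ]], the ordered product D_{2N} D_{2N−1} ⋯ D_2 D_1 equals the 2×2 identity matrix. -/

import Mathlib

open Complex Matrix

/-
Writing `P = e^{iπ/N}`, each `D_x` has the shape `[[P c, e s], [e⁻¹ s, -P⁻¹ c]]` with `e = e^{iα_x}`
and `c² + s² = 1`. The hypothesis on `α` says that the phase of `D_{x+1}` is `P² e`, and for two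
consecutive matrices related in this way the off-diagonal terms cancel:
`D_{x+1} D_x = diag(P², P⁻²)`. The product of the `2N` matrices is therefore `diag(P^{2N}, P^{-2N})`,
which is the identity because `P^{2N} = e^{2πi} = 1`.
-/

/-- `D_x = transferMatrix (e^{iπ/N}) (e^{iα_x}) (cos θ) (sin θ)`. -/
def transferMatrix {K : Type*} [Field K] (p e c s : K) : Matrix (Fin 2) (Fin 2) K :=
  !![p * c, e * s; e⁻¹ * s, -p⁻¹ * c]

theorem transferMatrix_mul_transferMatrix {K : Type*} [Field K] {p e c s : K}
    (hp : p ≠ 0) (he : e ≠ 0) (hcs : c ^ 2 + s ^ 2 = 1) :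
    transferMatrix p (p ^ 2 * e) c s * transferMatrix p e c s = diagonal ![p ^ 2, (p ^ 2)⁻¹] := by
  ext i j
  fin_cases i <;> fin_cases j <;>
    simp [transferMatrix, Matrix.mul_apply, Fin.sum_univ_two] <;>
    field_simp <;> first | linear_combination hcs | ring1

theorem diagonal_pow_eq_one {K : Type*} [DivisionRing K] {q : K} {n : ℕ} (hq : q ^ n = 1) :
    diagonal ![q, q⁻¹] ^ n = 1 := by
  rw [diagonal_pow, ← diagonal_one]
  congr 1
  ext i
  fin_cases i <;> simp [hq, inv_pow]

theorem List.prod_ofFn_two_mul_sub {M : Type*} [Monoid M] (f : ℤ → M) (A : M)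
    (hf : ∀ x, f (x + 1) * f x = A) (n : ℕ) :
    (List.ofFn fun i : Fin (2 * n) => f (2 * n - i)).prod = A ^ n := by
  induction n with
  | zero => simp
  | succ n ih =>
    show (List.ofFn fun i : Fin (2 * n + 1 + 1) => f (2 * (n + 1 : ℕ) - i)).prod = A ^ (n + 1)
    rw [List.ofFn_succ, List.ofFn_succ, List.prod_cons, List.prod_cons, ← mul_assoc, pow_succ',
      ← ih, ← hf (2 * n + 1)]
    congr 2
    · congr 1; push_cast [Fin.val_succ, Fin.val_zero]; ring
    · congr 1; funext i; congr 1; push_cast [Fin.val_succ, Fin.val_zero]; ring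

theorem exp_I_mul_pi_div_sq_pow_eq_one (N : ℕ) : (exp (I * (Real.pi / N)) ^ 2) ^ N = 1 := by
  rcases eq_or_ne N 0 with rfl | hN
  · simp
  rw [← pow_mul, ← exp_nat_mul, ← exp_two_pi_mul_I]
  congr 1
  push_cast
  field_simp

theorem stmt_6_general (N : ℕ) (θ : ℝ)
    (α : ℤ → ℝ)
    (hα : ∀ x : ℤ, ∃ k : ℤ, α (x + 1) - α x = 2 * Real.pi / N + 2 * Real.pi * k)
    (D : ℤ → Matrix (Fin 2) (Fin 2) ℂ)
    (hD : ∀ x : ℤ, D x =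
      !![Complex.exp (Complex.I * (Real.pi / N)) * Real.cos θ,
         Complex.exp (Complex.I * α x) * Real.sin θ;
         Complex.exp (-Complex.I * α x) * Real.sin θ,
         -Complex.exp (-Complex.I * (Real.pi / N)) * Real.cos θ]) :
    (List.ofFn (fun i : Fin (2 * N) => D ((2 * N : ℤ) - (i : ℤ)))).prod = 1 := by
  set P := exp (I * (Real.pi / N))
  have hD_transfer : ∀ x, D x = transferMatrix P (exp (I * α x)) (Real.cos θ) (Real.sin θ) := fun x => by
    simp only [hD, transferMatrix, P, neg_mul, exp_neg]
  have hphase : ∀ x, exp (I * α (x + 1)) = P ^ 2 * exp (I * α x) := fun x => by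
    obtain ⟨k, hk⟩ := hα x
    rw [← exp_nat_mul, ← exp_add, exp_eq_exp_iff_exists_int]
    refine ⟨k, ?_⟩
    rw [sub_eq_iff_eq_add'.mp hk]
    push_cast
    ring
  have hpair : ∀ x, D (x + 1) * D x = diagonal ![P ^ 2, (P ^ 2)⁻¹] := fun x => by
    rw [hD_transfer, hD_transfer, hphase]
    exact transferMatrix_mul_transferMatrix (exp_ne_zero _) (exp_ne_zero _)
      (by exact_mod_cast Real.cos_sq_add_sin_sq θ)
  rw [List.prod_ofFn_two_mul_sub D _ hpair, diagonal_pow_eq_one (exp_I_mul_pi_div_sq_pow_eq_one N)]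

theorem stmt_6 (N : ℕ) (hN : 1 ≤ N) (θ : ℝ) (hcos : Real.cos θ ≠ 0)
    (α : ℤ → ℝ)
    (hα : ∀ x : ℤ, ∃ k : ℤ, α (x + 1) - α x = 2 * Real.pi / N + 2 * Real.pi * k)
    (D : ℤ → Matrix (Fin 2) (Fin 2) ℂ)
    (hD : ∀ x : ℤ, D x =
      !![Complex.exp (Complex.I * (Real.pi / N)) * Real.cos θ,
         Complex.exp (Complex.I * α x) * Real.sin θ;
         Complex.exp (-Complex.I * α x) * Real.sin θ,
         -Complex.exp (-Complex.I * (Real.pi / N)) * Real.cos θ]) :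
    (List.ofFn (fun i : Fin (2 * N) => D ((2 * N : ℤ) - (i : ℤ)))).prod = 1 :=
  stmt_6_general N θ α hα D hD
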